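/- arXiv:1705.05915 — 9 statements merged into one kernel-verified Lean document; each statement's English description precedes it below -/
import Mathlib

section
/- For every permutation ((1),(2),...,(n)) of N, every point (x,z) of K_σ satisfies the polymatroid inequality Σ_{i=1}^n π_(i) x_(i) ≤ z − √σ, where π_(k) = √σ_(k) − √σ_(k−1) with σ_(0) = σ and σ_(k) = a_(k) + σ_(k−1). -/
/-!
The square root is concave on `[0, ∞)`, so its increments `√(s + c) - √s` decrease in `s`.
For binary `x`, the left-hand side is the sum of the increments `π_(k)` over the chosen indices
`k`, and the increment at `k` is taken from `σ_(k-1)`, which dominates `σ` plus the weights of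
the chosen indices before `k`. Replacing each increment by the one taken from that smaller
point makes the sum telescope to `√(σ + ∑ a_i x_i) - √σ ≤ z - √σ`.
-/

open Finset Set

section Concave

variable {𝕜 : Type*} [Field 𝕜] [LinearOrder 𝕜] [IsStrictOrderedRing 𝕜] {f : 𝕜 → 𝕜}

theorem ConcaveOn.map_add_sub_map_le_of_le {s : Set 𝕜} (hf : ConcaveOn 𝕜 s f) {x y c : 𝕜}
    (hx : x ∈ s) (hyc : y + c ∈ s) (hxy : x ≤ y) (hc : 0 ≤ c) :
    f (y + c) - f y ≤ f (x + c) - f x := by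
  rcases hc.eq_or_lt with rfl | hc
  · simp
  -- `x + c` and `y` are convex combinations of `x` and `y + c` with swapped weights.
  have hL : 0 < y + c - x := by linarith
  set t := c / (y + c - x)
  have ht : 0 ≤ t := by positivity
  have ht1 : 0 ≤ 1 - t := by
    rw [sub_nonneg, div_le_one hL]; linarith
  have hxc := hf.2 hx hyc ht1 ht (by ring)
  have hy := hf.2 hx hyc ht ht1 (by ring)
  have exc : (1 - t) • x + t • (y + c) = x + c := by
    simp only [smul_eq_mul, t]; field_simp; ring
  have ey : t • x + (1 - t) • (y + c) = y := by
    simp only [smul_eq_mul, t]; field_simp; ring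
  rw [exc] at hxc
  rw [ey] at hy
  simp only [smul_eq_mul] at hxc hy
  linarith

theorem ConcaveOn.sum_map_Iic_sub_map_Iio_le {ι : Type*} [LinearOrder ι] [LocallyFiniteOrderBot ι]
    {σ : 𝕜} (hf : ConcaveOn 𝕜 (Ici σ) f) {b : ι → 𝕜} (hb : ∀ i, 0 ≤ b i) (S : Finset ι) :
    ∑ k ∈ S, (f (σ + ∑ j ∈ Iic k, b j) - f (σ + ∑ j ∈ Iio k, b j))
      ≤ f (σ + ∑ k ∈ S, b k) - f σ := by
  induction S using Finset.induction_on_max with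
  | empty => simp
  | insert m S hlt ih =>
    have hm : m ∉ S := fun h => lt_irrefl m (hlt m h)
    have hS : 0 ≤ ∑ k ∈ S, b k := sum_nonneg fun i _ => hb i
    have hSm : ∑ k ∈ S, b k ≤ ∑ j ∈ Iio m, b j :=
      sum_le_sum_of_subset_of_nonneg (fun i hi => mem_Iio.2 (hlt i hi)) fun i _ _ => hb i
    have step := hf.map_add_sub_map_le_of_le (x := σ + ∑ k ∈ S, b k)
      (y := σ + ∑ j ∈ Iio m, b j) (mem_Ici.2 (by linarith)) (mem_Ici.2 (by linarith [hb m]))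
      (by linarith) (hb m)
    rw [sum_insert hm, sum_insert hm, Iic_eq_cons_Iio, sum_cons]
    calc _ ≤ (f (σ + ∑ k ∈ S, b k + b m) - f (σ + ∑ k ∈ S, b k))
          + (f (σ + ∑ k ∈ S, b k) - f σ) := by
          refine add_le_add ?_ ih
          convert step using 3; ring
      _ = _ := by ring_nf

end Concave

theorem Finset.sum_mul_eq_sum_filter_eq_one {ι R : Type*} [Fintype ι] [Semiring R]
    [Nontrivial R] [DecidableEq R] (f y : ι → R) (hy : ∀ i, y i = 0 ∨ y i = 1) :
    ∑ i, f i * y i = ∑ i ∈ univ.filter (fun i => y i = 1), f i := by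
  rw [sum_filter]
  refine sum_congr rfl fun i _ => ?_
  rcases hy i with h | h <;> simp [h]

theorem polymatroid_inequality_valid_general
    (n : ℕ) (σ : ℝ) (a : Fin n → ℝ) (hσ : 0 ≤ σ) (ha : ∀ i, 0 < a i)
    (e : Equiv.Perm (Fin n)) (x : Fin n → ℝ) (z : ℝ)
    (hx : ∀ i, x i = 0 ∨ x i = 1)
    (hK : Real.sqrt (σ + ∑ i, a i * x i) ≤ z) :
    ∑ k, (Real.sqrt (σ + ∑ j ∈ Finset.univ.filter (fun j => j ≤ k), a (e j))
        - Real.sqrt (σ + ∑ j ∈ Finset.univ.filter (fun j => j < k), a (e j))) * x (e k)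
      ≤ z - Real.sqrt σ := by
  have hxe : ∀ k, x (e k) = 0 ∨ x (e k) = 1 := fun k => hx (e k)
  have hsqrt : ConcaveOn ℝ (Ici σ) Real.sqrt :=
    Real.strictConcaveOn_sqrt.concaveOn.subset (Ici_subset_Ici.2 hσ) (convex_Ici σ)
  have hload : ∑ i, a i * x i = ∑ k ∈ univ.filter (fun k => x (e k) = 1), a (e k) := by
    rw [← Equiv.sum_comp e (fun i => a i * x i), sum_mul_eq_sum_filter_eq_one _ _ hxe]
  simp only [filter_ge_eq_Iic, filter_gt_eq_Iio]
  rw [sum_mul_eq_sum_filter_eq_one _ _ hxe]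
  calc _ ≤ Real.sqrt (σ + ∑ i, a i * x i) - Real.sqrt σ := by
        rw [hload]; exact hsqrt.sum_map_Iic_sub_map_Iio_le (fun k => (ha (e k)).le) _
    _ ≤ z - Real.sqrt σ := by linarith

/-- **Polymatroid inequality validity for `K_σ`.**
`N = {1,...,n}`, `σ ≥ 0`, `a i > 0`. `K_σ` consists of `(x, z)` with `x` binary,
`z ≥ 0` and `√(σ + ∑ i, a i * x i) ≤ z`. For any permutation `e` of `Fin n`
(so `e k` is the `k`-th element `(k)` of the permutation), with
`σ_(k) = σ + ∑_{j ≤ k} a (e j)` (and `σ_(0) = σ`), and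
`π_(k) = √σ_(k) − √σ_(k−1)`, every point of `K_σ` satisfies
`∑ k, π_(k) * x (e k) ≤ z − √σ`. -/
theorem polymatroid_inequality_valid
    (n : ℕ) (σ : ℝ) (a : Fin n → ℝ) (hσ : 0 ≤ σ) (ha : ∀ i, 0 < a i)
    (e : Equiv.Perm (Fin n)) (x : Fin n → ℝ) (z : ℝ)
    (hx : ∀ i, x i = 0 ∨ x i = 1) (hz : 0 ≤ z)
    (hK : Real.sqrt (σ + ∑ i, a i * x i) ≤ z) :
    ∑ k, (Real.sqrt (σ + ∑ j ∈ Finset.univ.filter (fun j => j ≤ k), a (e j))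
        - Real.sqrt (σ + ∑ j ∈ Finset.univ.filter (fun j => j < k), a (e j))) * x (e k)
      ≤ z - Real.sqrt σ :=
  polymatroid_inequality_valid_general n σ a hσ ha e x z hx hK
end

section
/- The convex hull of K_σ equals the set {(x,z) ∈ [0,1]^N × ℝ_{≥0} : π'x ≤ z − √σ for all π ∈ Π_σ}, where Π_σ is the set of coefficient vectors π arising from all permutations of N. -/
/-- The polymatroid coefficient `π_(k)` for permutation `e`, with
`σ_(0) = σ`, `σ_(k) = a_(k) + σ_(k−1)`, `π_(k) = √σ_(k) − √σ_(k−1)`. -/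
noncomputable def piCoef (n : ℕ) (σ : ℝ) (a : Fin n → ℝ) (e : Equiv.Perm (Fin n))
    (k : Fin n) : ℝ :=
  Real.sqrt (σ + ∑ j ∈ Finset.univ.filter (fun j => j ≤ k), a (e j))
    - Real.sqrt (σ + ∑ j ∈ Finset.univ.filter (fun j => j < k), a (e j))

/-!
Along an order `e`, the coefficient `π_k` is the increment of `√(σ + ·)` over the prefix sums of
`a ∘ e`. By concavity of `√` this increment can only grow when the prefix is shrunk, and
`x (e k) ∈ [0, 1]` times it is at most the increment over the step `x (e k) * a (e k)`; telescoping
gives `π'x ≤ √(σ + a'x) - √σ` on the whole cube. So the inequalities hold on `K_σ`, and being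
linear they cut out a convex set.

Conversely, sort `x` decreasingly by `e`. Then `x` is the convex combination of the indicators of
the prefixes `{e 0, …, e (m - 1)}`, `m = 0, …, n`, weighted by the drops of the staircase
`1 ≥ x (e 0) ≥ … ≥ x (e (n - 1)) ≥ 0`. Summation by parts shows that the same weights average the
values `√(σ + a (e 0) + … + a (e (m - 1)))` to `√σ + Σ π_k x (e k) ≤ z`; raising all vertices by
the common slack writes `(x, z)` as a convex combination of points of `K_σ`.
-/

open Finset

namespace SqrtPolymatroid

lemma sqrt_add_sub_sqrt_le_of_le {s t u : ℝ} (hs : 0 ≤ s) (hst : s ≤ t) (hu : 0 ≤ u) :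
    √(t + u) - √t ≤ √(s + u) - √s := by
  -- squaring `√(t + u) + √s ≤ √(s + u) + √t` reduces it to `(t + u) s ≤ (s + u) t`
  have hprod : √((t + u) * s) ≤ √((s + u) * t) := Real.sqrt_le_sqrt (by nlinarith)
  rw [Real.sqrt_mul (by linarith), Real.sqrt_mul (by linarith)] at hprod
  have key : (√(t + u) + √s) ^ 2 ≤ (√(s + u) + √t) ^ 2 := by
    nlinarith [Real.sq_sqrt (show 0 ≤ t + u by linarith), Real.sq_sqrt (show 0 ≤ s + u by linarith),
      Real.sq_sqrt hs, Real.sq_sqrt (hs.trans hst)]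
  linarith [le_of_sq_le_sq key (by positivity)]

lemma mul_sqrt_add_sub_sqrt_le {s u y : ℝ} (hs : 0 ≤ s) (hu : 0 ≤ u) (hy₀ : 0 ≤ y) (hy₁ : y ≤ 1) :
    y * (√(s + u) - √s) ≤ √(s + y * u) - √s := by
  have h := Real.strictConcaveOn_sqrt.concaveOn.2 (Set.mem_Ici.2 hs)
    (Set.mem_Ici.2 (add_nonneg hs hu)) (sub_nonneg.2 hy₁) hy₀ (sub_add_cancel 1 y)
  simp only [smul_eq_mul] at h
  rw [show (1 - y) * s + y * (s + u) = s + y * u by ring] at h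
  linarith

noncomputable def prefixSqrt (σ : ℝ) (u : ℕ → ℝ) (m : ℕ) : ℝ := √(σ + ∑ i ∈ range m, u i)

lemma sum_mul_prefixSqrt_sub_le {σ : ℝ} (hσ : 0 ≤ σ) {u y : ℕ → ℝ} (hu : ∀ j, 0 ≤ u j)
    (hy : ∀ j, 0 ≤ y j ∧ y j ≤ 1) (m : ℕ) :
    ∑ j ∈ range m, y j * (prefixSqrt σ u (j + 1) - prefixSqrt σ u j)
      ≤ prefixSqrt σ (fun j => y j * u j) m - √σ := by
  induction m with
  | zero => simp [prefixSqrt]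
  | succ m ih =>
    have hyu : ∑ j ∈ range m, y j * u j ≤ ∑ j ∈ range m, u j :=
      sum_le_sum fun j _ => mul_le_of_le_one_left (hu j) (hy j).2
    have hstep : y m * (prefixSqrt σ u (m + 1) - prefixSqrt σ u m)
        ≤ prefixSqrt σ (fun j => y j * u j) (m + 1) - prefixSqrt σ (fun j => y j * u j) m := by
      simp only [prefixSqrt, sum_range_succ, ← add_assoc]
      have hs : 0 ≤ σ + ∑ j ∈ range m, y j * u j :=
        add_nonneg hσ (sum_nonneg fun j _ => mul_nonneg (hy j).1 (hu j))
      calc y m * (√(σ + ∑ j ∈ range m, u j + u m) - √(σ + ∑ j ∈ range m, u j))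
          ≤ y m * (√(σ + ∑ j ∈ range m, y j * u j + u m) - √(σ + ∑ j ∈ range m, y j * u j)) :=
            mul_le_mul_of_nonneg_left (sqrt_add_sub_sqrt_le_of_le hs (by linarith) (hu m)) (hy m).1
        _ ≤ _ := mul_sqrt_add_sub_sqrt_le hs (hu m) (hy m).1 (hy m).2
    rw [sum_range_succ]
    linarith

variable {n : ℕ}

def zeroExtend {M : Type*} [Zero M] (f : Fin n → M) (i : ℕ) : M :=
  if h : i < n then f ⟨i, h⟩ else 0

@[simp]
lemma zeroExtend_val {M : Type*} [Zero M] (f : Fin n → M) (k : Fin n) : zeroExtend f k = f k := by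
  simp [zeroExtend]

lemma zeroExtend_of_le {M : Type*} [Zero M] (f : Fin n → M) {i : ℕ} (hi : n ≤ i) :
    zeroExtend f i = 0 := by
  simp [zeroExtend, hi.not_gt]

lemma sum_filter_val_lt {M : Type*} [AddCommMonoid M] (f : Fin n → M) {m : ℕ} (hm : m ≤ n) :
    ∑ j ∈ univ.filter (fun j : Fin n => (j : ℕ) < m), f j = ∑ i ∈ range m, zeroExtend f i := by
  have himage : (univ.filter (fun j : Fin n => (j : ℕ) < m)).map Fin.valEmbedding = range m := by
    ext i
    simp only [mem_map, mem_filter, mem_univ, true_and, Fin.valEmbedding_apply, mem_range]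
    exact ⟨fun ⟨j, hj, hji⟩ => hji ▸ hj, fun hi => ⟨⟨i, hi.trans_le hm⟩, hi, rfl⟩⟩
  rw [← himage, sum_map]
  simp

lemma piCoef_eq_prefixSqrt_sub (σ : ℝ) (a : Fin n → ℝ) (e : Equiv.Perm (Fin n)) (k : Fin n) :
    piCoef n σ a e k
      = prefixSqrt σ (zeroExtend (a ∘ e)) (k + 1) - prefixSqrt σ (zeroExtend (a ∘ e)) k := by
  have hle : univ.filter (fun j : Fin n => j ≤ k) = univ.filter (fun j : Fin n => (j : ℕ) < k + 1) :=
    filter_congr fun j _ => Fin.le_iff_val_le_val.trans Nat.lt_succ_iff.symm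
  rw [piCoef, prefixSqrt, prefixSqrt, hle, ← sum_filter_val_lt _ k.isLt,
    ← sum_filter_val_lt _ k.isLt.le]
  rfl

lemma sum_piCoef_mul_le_sqrt_sub {σ : ℝ} (hσ : 0 ≤ σ) {a x : Fin n → ℝ} (ha : ∀ i, 0 ≤ a i)
    (hx : ∀ i, 0 ≤ x i ∧ x i ≤ 1) (e : Equiv.Perm (Fin n)) :
    ∑ k, piCoef n σ a e k * x (e k) ≤ √(σ + ∑ i, a i * x i) - √σ := by
  have hu : ∀ j, 0 ≤ zeroExtend (a ∘ e) j := fun j => by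
    unfold zeroExtend; split_ifs
    exacts [ha _, le_rfl]
  have hy : ∀ j, 0 ≤ zeroExtend (x ∘ e) j ∧ zeroExtend (x ∘ e) j ≤ 1 := fun j => by
    unfold zeroExtend; split_ifs
    exacts [hx _, ⟨le_rfl, zero_le_one⟩]
  have h := sum_mul_prefixSqrt_sub_le hσ hu hy n
  have hdot : ∑ i, a i * x i = ∑ j ∈ range n, zeroExtend (x ∘ e) j * zeroExtend (a ∘ e) j := by
    rw [← Fin.sum_univ_eq_sum_range (fun j => zeroExtend (x ∘ e) j * zeroExtend (a ∘ e) j),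
      ← Equiv.sum_comp e]
    simp [mul_comm]
  rw [← Fin.sum_univ_eq_sum_range] at h
  simpa [prefixSqrt, hdot, piCoef_eq_prefixSqrt_sub, mul_comm] using h

lemma sum_range_succ_sub_mul (y g : ℕ → ℝ) (n : ℕ) :
    ∑ m ∈ range (n + 1), (y m - y (m + 1)) * g m
      = y 0 * g 0 + ∑ k ∈ range n, y (k + 1) * (g (k + 1) - g k) - y (n + 1) * g n := by
  induction n with
  | zero => simp [sub_mul]
  | succ n ih => rw [sum_range_succ, ih, sum_range_succ]; ring

noncomputable def staircase (y : Fin n → ℝ) : ℕ → ℝ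
  | 0 => 1
  | k + 1 => zeroExtend y k

lemma sum_staircase_sub_mul (y : Fin n → ℝ) (g : ℕ → ℝ) :
    ∑ m ∈ range (n + 1), (staircase y m - staircase y (m + 1)) * g m
      = g 0 + ∑ k : Fin n, y k * (g (k + 1) - g k) := by
  rw [sum_range_succ_sub_mul, ← Fin.sum_univ_eq_sum_range]
  simp [staircase, zeroExtend_of_le]

lemma staircase_antitone {y : Fin n → ℝ} (hy : Antitone y) (hy₀ : ∀ k, 0 ≤ y k)
    (hy₁ : ∀ k, y k ≤ 1) : Antitone (staircase y) := by
  refine antitone_nat_of_succ_le fun m => ?_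
  cases m with
  | zero => simp only [staircase, zeroExtend]; split_ifs <;> simp [hy₁]
  | succ k =>
    simp only [staircase, zeroExtend]
    split_ifs with h₁ h₂
    · exact hy (Fin.mk_le_mk.2 k.le_succ)
    · omega
    · exact hy₀ _
    · exact le_rfl

def prefixIndicator (e : Equiv.Perm (Fin n)) (m : ℕ) (i : Fin n) : ℝ :=
  if (e.symm i : ℕ) < m then 1 else 0

lemma sum_staircase_sub_mul_prefixIndicator (x : Fin n → ℝ) (e : Equiv.Perm (Fin n)) (i : Fin n) :
    ∑ m ∈ range (n + 1), (staircase (x ∘ e) m - staircase (x ∘ e) (m + 1)) * prefixIndicator e m i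
      = x i := by
  have hjump : ∀ k : Fin n, prefixIndicator e (k + 1) i - prefixIndicator e k i
      = if e.symm i = k then 1 else 0 := fun k => by
    simp only [prefixIndicator, Fin.ext_iff]
    split_ifs <;> norm_num <;> omega
  rw [sum_staircase_sub_mul]
  simp only [hjump, mul_ite, mul_one, mul_zero, sum_ite_eq, mem_univ, if_true]
  simp [prefixIndicator]

lemma sum_mul_prefixIndicator (a : Fin n → ℝ) (e : Equiv.Perm (Fin n)) {m : ℕ} (hm : m ≤ n) :
    ∑ i, a i * prefixIndicator e m i = ∑ i ∈ range m, zeroExtend (a ∘ e) i := by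
  rw [← sum_filter_val_lt _ hm, ← Equiv.sum_comp e, sum_filter]
  simp [prefixIndicator]

def binarySqrtSet (σ : ℝ) (a : Fin n → ℝ) : Set ((Fin n → ℝ) × ℝ) :=
  {p | (∀ i, p.1 i = 0 ∨ p.1 i = 1) ∧ 0 ≤ p.2 ∧ √(σ + ∑ i, a i * p.1 i) ≤ p.2}

lemma prefixIndicator_mk_mem_binarySqrtSet (σ : ℝ) (a : Fin n → ℝ) (e : Equiv.Perm (Fin n))
    {m : ℕ} (hm : m ≤ n) {t : ℝ} (ht : 0 ≤ t) :
    (prefixIndicator e m, prefixSqrt σ (zeroExtend (a ∘ e)) m + t) ∈ binarySqrtSet σ a := by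
  refine ⟨fun i => ?_, add_nonneg (Real.sqrt_nonneg _) ht, ?_⟩
  · dsimp only [prefixIndicator]
    split_ifs <;> simp
  · rw [sum_mul_prefixIndicator a e hm, ← prefixSqrt]
    linarith

lemma mk_mem_convexHull_binarySqrtSet {σ z : ℝ} {a x : Fin n → ℝ} (hx : ∀ i, 0 ≤ x i ∧ x i ≤ 1)
    {e : Equiv.Perm (Fin n)} (he : Antitone (x ∘ e))
    (hz : ∑ k, piCoef n σ a e k * x (e k) ≤ z - √σ) :
    (x, z) ∈ convexHull ℝ (binarySqrtSet σ a) := by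
  set w : ℕ → ℝ := fun m => staircase (x ∘ e) m - staircase (x ∘ e) (m + 1) with hw
  set F := prefixSqrt σ (zeroExtend (a ∘ e))
  have hw₀ : ∀ m, 0 ≤ w m := fun m => sub_nonneg.2 <|
    staircase_antitone he (fun k => (hx _).1) (fun k => (hx _).2) m.le_succ
  have hw₁ : ∑ m ∈ range (n + 1), w m = 1 := by
    simpa only [mul_one, sub_self, mul_zero, sum_const_zero, add_zero] using
      sum_staircase_sub_mul (x ∘ e) fun _ => 1
  have hwF : ∑ m ∈ range (n + 1), w m * F m = √σ + ∑ k, piCoef n σ a e k * x (e k) := by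
    rw [hw, sum_staircase_sub_mul]
    simp [F, prefixSqrt, piCoef_eq_prefixSqrt_sub, mul_comm]
  set t := z - ∑ m ∈ range (n + 1), w m * F m
  have hcomb : ∑ m ∈ range (n + 1), w m • (prefixIndicator e m, F m + t) = (x, z) := by
    ext i
    · simp only [Prod.fst_sum, Finset.sum_apply, Prod.smul_fst, Pi.smul_apply, smul_eq_mul]
      exact sum_staircase_sub_mul_prefixIndicator x e i
    · simp only [Prod.snd_sum, Prod.smul_snd, smul_eq_mul, mul_add, sum_add_distrib, ← sum_mul, hw₁]
      ring
  rw [← hcomb]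
  exact (convex_convexHull ℝ _).sum_mem (fun m _ => hw₀ m) hw₁ fun m hm =>
    subset_convexHull ℝ _ <| prefixIndicator_mk_mem_binarySqrtSet σ a e
      (Nat.lt_succ_iff.1 (mem_range.1 hm)) (by linarith)

def polymatroidRelaxation (σ : ℝ) (a : Fin n → ℝ) : Set ((Fin n → ℝ) × ℝ) :=
  {p | (∀ i, 0 ≤ p.1 i ∧ p.1 i ≤ 1) ∧ 0 ≤ p.2 ∧
    ∀ e : Equiv.Perm (Fin n), ∑ k, piCoef n σ a e k * p.1 (e k) ≤ p.2 - √σ}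

lemma binarySqrtSet_subset_polymatroidRelaxation {σ : ℝ} (hσ : 0 ≤ σ) {a : Fin n → ℝ}
    (ha : ∀ i, 0 ≤ a i) : binarySqrtSet σ a ⊆ polymatroidRelaxation σ a := by
  rintro p ⟨hx, hz, hsqrt⟩
  have hx' : ∀ i, 0 ≤ p.1 i ∧ p.1 i ≤ 1 := fun i => by rcases hx i with h | h <;> simp [h]
  exact ⟨hx', hz, fun e => (sum_piCoef_mul_le_sqrt_sub hσ ha hx' e).trans (by linarith)⟩

lemma convex_polymatroidRelaxation (σ : ℝ) (a : Fin n → ℝ) :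
    Convex ℝ (polymatroidRelaxation σ a) := by
  rintro p ⟨hx, hz, hπ⟩ q ⟨hx', hz', hπ'⟩ s t hs ht hst
  simp only [polymatroidRelaxation, Set.mem_ofPred_eq, Prod.fst_add, Prod.snd_add, Prod.smul_fst,
    Prod.smul_snd, Pi.add_apply, Pi.smul_apply, smul_eq_mul]
  refine ⟨fun i => ⟨by nlinarith [hx i, hx' i], by nlinarith [hx i, hx' i]⟩, by positivity,
    fun e => ?_⟩
  calc ∑ k, piCoef n σ a e k * (s * p.1 (e k) + t * q.1 (e k))
      = s * ∑ k, piCoef n σ a e k * p.1 (e k) + t * ∑ k, piCoef n σ a e k * q.1 (e k) := by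
        simp only [mul_sum, ← sum_add_distrib]
        exact sum_congr rfl fun k _ => by ring
    _ ≤ s * (p.2 - √σ) + t * (q.2 - √σ) :=
      add_le_add (mul_le_mul_of_nonneg_left (hπ e) hs) (mul_le_mul_of_nonneg_left (hπ' e) ht)
    _ = s * p.2 + t * q.2 - √σ := by linear_combination (-√σ) * hst

end SqrtPolymatroid

open SqrtPolymatroid in
/-- **Convex hull of `K_σ`** (Atamtürk–Narayanan). The convex hull of
`K_σ = {(x,z) ∈ {0,1}^N × ℝ₊ : √(σ + ∑ a i x i) ≤ z}` equals
`{(x,z) ∈ [0,1]^N × ℝ₊ : π'x ≤ z − √σ for all π ∈ Π_σ}`, where `Π_σ` ranges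
over the coefficient vectors of all permutations of `N`. -/
theorem convexHull_K_eq
    (n : ℕ) (σ : ℝ) (a : Fin n → ℝ) (hσ : 0 ≤ σ) (ha : ∀ i, 0 < a i) :
    convexHull ℝ
      {p : (Fin n → ℝ) × ℝ | (∀ i, p.1 i = 0 ∨ p.1 i = 1) ∧ 0 ≤ p.2 ∧
        Real.sqrt (σ + ∑ i, a i * p.1 i) ≤ p.2}
    = {p : (Fin n → ℝ) × ℝ | (∀ i, 0 ≤ p.1 i ∧ p.1 i ≤ 1) ∧ 0 ≤ p.2 ∧
        ∀ e : Equiv.Perm (Fin n),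
          ∑ k, piCoef n σ a e k * p.1 (e k) ≤ p.2 - Real.sqrt σ} := by
  refine (convexHull_min (binarySqrtSet_subset_polymatroidRelaxation hσ fun i => (ha i).le)
    (convex_polymatroidRelaxation σ a)).antisymm ?_
  rintro ⟨x, z⟩ ⟨hx, -, hπ⟩
  have hsorted : Antitone (x ∘ Tuple.sort (OrderDual.toDual ∘ x)) :=
    monotone_toDual_comp_iff.1 (Tuple.monotone_sort _)
  exact mk_mem_convexHull_binarySqrtSet hx hsorted (hπ _)
end

section
/- Let (x̄, z̄) ∈ [0,1]^N × ℝ_{≥0} with coordinates ordered so that x̄_1 ≥ x̄_2 ≥ ... ≥ x̄_n. If (x̄, z̄) does not belong to the convex hull of K_σ, then it violates the polymatroid inequality corresponding to the identity permutation, i.e., Σ_{i=1}^n π_i x̄_i > z̄ − √σ where π_k = √σ_k − √σ_{k−1}, σ_0 = σ, σ_k = a_k + σ_{k−1}. Equivalently, among all permutations, one sorting the coordinates of x̄ in nonincreasing order maximizes π'x̄. -/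
/-!
Write `x̄ = ∑ₖ (x̄ₖ₋₁ - x̄ₖ) 𝟙_{[0,k)}` as a convex combination of the prefix indicators
`𝟙_{[0,k)}`, `k = 0, …, n`, with the conventions `x̄₋₁ = 1`, `x̄ₙ = 0`; the weights are nonnegative
because `x̄` is sorted and lies in `[0,1]`. By Abel summation, the same weights applied to any
values `g k` give `g 0 + ∑ᵢ x̄ᵢ (g (i+1) - g i)`. With `g k = √σₖ + δ`, where `δ ≥ 0` is the slack
of a satisfied identity polymatroid inequality, every point `(𝟙_{[0,k)}, g k)` lies in `K_σ` and
the combination is `(x̄, z̄)`, so `(x̄, z̄) ∈ conv(K_σ)`.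
-/

/-- The polymatroid coefficient `π_k` for the identity permutation:
`σ_0 = σ`, `σ_k = a_k + σ_{k−1}`, `π_k = √σ_k − √σ_{k−1}`. -/
noncomputable def piCoefId (n : ℕ) (σ : ℝ) (a : Fin n → ℝ) (k : Fin n) : ℝ :=
  Real.sqrt (σ + ∑ j ∈ Finset.univ.filter (fun j => j ≤ k), a j)
    - Real.sqrt (σ + ∑ j ∈ Finset.univ.filter (fun j => j < k), a j)

open Finset

theorem sum_range_succ_sub_mul (X g : ℕ → ℝ) (N : ℕ) :
    ∑ k ∈ range (N + 1), (X k - X (k + 1)) * g k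
      = X 0 * g 0 - X (N + 1) * g N + ∑ i ∈ range N, X (i + 1) * (g (i + 1) - g i) := by
  induction N with
  | zero => simp [sub_mul]
  | succ N ih => rw [sum_range_succ, ih, sum_range_succ]; ring

section PrefixChain

variable {n : ℕ}

def padOne (x : Fin n → ℝ) : ℕ → ℝ
  | 0 => 1
  | m + 1 => if h : m < n then x ⟨m, h⟩ else 0

def prefixInd (n k : ℕ) : Fin n → ℝ := fun j => if (j : ℕ) < k then 1 else 0

theorem prefixInd_succ_sub_self (k : ℕ) (j : Fin n) :
    prefixInd n (k + 1) j - prefixInd n k j = if k = j then 1 else 0 := by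
  simp only [prefixInd]
  split_ifs <;> norm_num <;> omega

variable {x : Fin n → ℝ}

theorem padOne_antitone (hx : Antitone x) (hx01 : ∀ i, x i ∈ Set.Icc (0 : ℝ) 1) :
    Antitone (padOne x) := by
  refine antitone_nat_of_succ_le fun m => ?_
  rcases m with _ | m
  · by_cases h : 0 < n
    · simpa [padOne, h] using (hx01 ⟨0, h⟩).2
    · simp [padOne, h]
  · by_cases hm : m + 1 < n
    · simpa [padOne, hm, Nat.lt_of_succ_lt hm] using hx (Fin.mk_le_mk.2 m.le_succ)
    · by_cases hm' : m < n
      · simpa [padOne, hm, hm'] using (hx01 ⟨m, hm'⟩).1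
      · simp [padOne, hm, hm']

theorem sum_padOne_sub_mul (x : Fin n → ℝ) (g : ℕ → ℝ) :
    ∑ k ∈ range (n + 1), (padOne x k - padOne x (k + 1)) * g k
      = g 0 + ∑ i, x i * (g (i + 1) - g i) := by
  have hpad : ∀ i : Fin n, padOne x (i + 1) = x i := by simp [padOne]
  have hlast : padOne x (n + 1) = 0 := by simp [padOne]
  rw [sum_range_succ_sub_mul, hlast, ← Fin.sum_univ_eq_sum_range, padOne]
  simp only [hpad, one_mul, zero_mul, sub_zero]

theorem mem_convexHull_prefixInd (hx : Antitone x) (hx01 : ∀ i, x i ∈ Set.Icc (0 : ℝ) 1)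
    (g : ℕ → ℝ) :
    (x, g 0 + ∑ i, x i * (g (i + 1) - g i)) ∈
      convexHull ℝ ((fun k => (prefixInd n k, g k)) '' Set.Iic n) := by
  set w : ℕ → ℝ := fun k => padOne x k - padOne x (k + 1)
  have hw : ∀ h : ℕ → ℝ, ∑ k ∈ range (n + 1), w k * h k = h 0 + ∑ i, x i * (h (i + 1) - h i) :=
    sum_padOne_sub_mul x
  have hw_sum : ∑ k ∈ range (n + 1), w k = 1 := by simpa using hw 1
  have hcomb : ∑ k ∈ range (n + 1), w k • (prefixInd n k, g k)
      = (x, g 0 + ∑ i, x i * (g (i + 1) - g i)) := by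
    refine Prod.ext (funext fun j => ?_) ?_
    · simp only [Prod.fst_sum, Prod.smul_fst, Finset.sum_apply, Pi.smul_apply, smul_eq_mul]
      rw [hw fun k => prefixInd n k j]
      simp only [prefixInd_succ_sub_self, Fin.val_inj, mul_ite, mul_one, mul_zero, sum_ite_eq',
        mem_univ, if_true]
      simp [prefixInd]
    · simpa only [Prod.snd_sum, Prod.smul_snd, smul_eq_mul] using hw g
  rw [← hcomb, ← centerMass_eq_of_sum_1 _ _ hw_sum]
  refine centerMass_mem_convexHull _ (fun k _ => ?_) (by simp [hw_sum]) fun k hk => ?_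
  · exact sub_nonneg.2 (padOne_antitone hx hx01 k.le_succ)
  · exact ⟨k, Nat.lt_succ_iff.1 (mem_range.1 hk), rfl⟩

noncomputable def prefixSqrt (σ : ℝ) (a : Fin n → ℝ) (k : ℕ) : ℝ :=
  Real.sqrt (σ + ∑ i, a i * prefixInd n k i)

theorem prefixSqrt_zero (σ : ℝ) (a : Fin n → ℝ) : prefixSqrt σ a 0 = Real.sqrt σ := by
  simp [prefixSqrt, prefixInd]

theorem piCoefId_eq (σ : ℝ) (a : Fin n → ℝ) (k : Fin n) :
    piCoefId n σ a k = prefixSqrt σ a (k + 1) - prefixSqrt σ a k := by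
  simp only [piCoefId, prefixSqrt, prefixInd, mul_ite, mul_one, mul_zero, ← sum_filter,
    Fin.le_def, Fin.lt_def, Nat.lt_succ_iff]

end PrefixChain

theorem separation_polymatroid_general
    (n : ℕ) (σ : ℝ) (a : Fin n → ℝ)
    (x : Fin n → ℝ) (z : ℝ)
    (hx01 : ∀ i, 0 ≤ x i ∧ x i ≤ 1)
    (hsort : ∀ i j : Fin n, i ≤ j → x j ≤ x i)
    (hnot : (x, z) ∉ convexHull ℝ
      {p : (Fin n → ℝ) × ℝ | (∀ i, p.1 i = 0 ∨ p.1 i = 1) ∧ 0 ≤ p.2 ∧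
        Real.sqrt (σ + ∑ i, a i * p.1 i) ≤ p.2}) :
    z - Real.sqrt σ < ∑ k, piCoefId n σ a k * x k := by
  by_contra! hcon
  set δ := z - Real.sqrt σ - ∑ k, piCoefId n σ a k * x k
  have hδ : 0 ≤ δ := sub_nonneg.2 hcon
  have hz : prefixSqrt σ a 0 + δ + ∑ i, x i * (prefixSqrt σ a (i + 1) + δ - (prefixSqrt σ a i + δ))
      = z := by
    simp only [prefixSqrt_zero, add_sub_add_right_eq_sub, ← piCoefId_eq, mul_comm (x _), δ]
    ring
  have hmem := mem_convexHull_prefixInd hsort hx01 (fun k => prefixSqrt σ a k + δ)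
  beta_reduce at hmem
  refine hnot (hz ▸ convexHull_mono ?_ hmem)
  rintro _ ⟨k, -, rfl⟩
  refine ⟨fun i => ?_, add_nonneg (Real.sqrt_nonneg _) hδ, le_add_of_nonneg_right hδ⟩
  by_cases h : (i : ℕ) < k <;> simp [prefixInd, h]

/-- **Separation for `conv(K_σ)`.** Let `(x̄, z̄) ∈ [0,1]^N × ℝ₊` with
`x̄ 1 ≥ x̄ 2 ≥ ... ≥ x̄ n`. If `(x̄, z̄)` is not in the convex hull of
`K_σ = {(x,z) ∈ {0,1}^N × ℝ₊ : √(σ + ∑ a i x i) ≤ z}`, then it violates the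
polymatroid inequality of the identity permutation:
`∑ k, π_k x̄_k > z̄ − √σ`. -/
theorem separation_polymatroid
    (n : ℕ) (σ : ℝ) (a : Fin n → ℝ) (hσ : 0 ≤ σ) (ha : ∀ i, 0 < a i)
    (x : Fin n → ℝ) (z : ℝ)
    (hx01 : ∀ i, 0 ≤ x i ∧ x i ≤ 1) (hz : 0 ≤ z)
    (hsort : ∀ i j : Fin n, i ≤ j → x j ≤ x i)
    (hnot : (x, z) ∉ convexHull ℝ
      {p : (Fin n → ℝ) × ℝ | (∀ i, p.1 i = 0 ∨ p.1 i = 1) ∧ 0 ≤ p.2 ∧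
        Real.sqrt (σ + ∑ i, a i * p.1 i) ≤ p.2}) :
    z - Real.sqrt σ < ∑ k, piCoefId n σ a k * x k :=
  separation_polymatroid_general n σ a x z hx01 hsort hnot
end

section
/- For every subset T ⊆ M and every permutation ((1),...,(n)) of N, every point (x,y,z) of L_σ satisfies the inequality Σ_{i=1}^n π_(i) x_(i) + √(σ + Σ_{i∈T} c_i y_i²) ≤ z, where π is the polymatroid coefficient vector computed with starting value σ + c(T), i.e., σ_(0) = σ + Σ_{i∈T} c_i, σ_(k) = a_(k) + σ_(k−1), and π_(k) = √σ_(k) − √σ_(k−1). -/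
/-!
Since `t ↦ √(t + A) - √t` is antitone on `[0, ∞)`, at every index with `x = 1` the polymatroid
coefficient is at most the increment of `√` along the partial sums `σ₀ + ∑_{j<k} a x`, so
telescoping gives `π x ≤ √(σ₀ + a x) - √σ₀`. Lowering the base point from `σ₀ = σ + c(T)` to
`σ + ∑_T c y² ≤ σ₀` only enlarges this increment, which leaves `√(σ + ∑_T c y² + a x) ≤ z`.
-/

open Finset Real

theorem antitoneOn_sqrt_add_sub_sqrt {A : ℝ} (hA : 0 ≤ A) :
    AntitoneOn (fun t => √(t + A) - √t) (Set.Ici 0) := by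
  intro s (hs : 0 ≤ s) t (ht : 0 ≤ t) hst
  suffices h : (√(t + A) + √s) ^ 2 ≤ (√(s + A) + √t) ^ 2 by
    have := (pow_le_pow_iff_left₀ (by positivity) (by positivity) two_ne_zero).1 h
    dsimp only
    linarith
  rw [add_sq, add_sq, sq_sqrt (by linarith), sq_sqrt hs, sq_sqrt (by linarith), sq_sqrt ht,
    mul_assoc, mul_assoc, ← sqrt_mul (by linarith), ← sqrt_mul (by linarith)]
  have : √((t + A) * s) ≤ √((s + A) * t) := sqrt_le_sqrt (by nlinarith)
  linarith

theorem sum_mul_le_sum_of_zero_or_one {ι : Type*} (s : Finset ι) {b x : ι → ℝ}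
    (hb : ∀ i ∈ s, 0 ≤ b i) (hx : ∀ i ∈ s, x i = 0 ∨ x i = 1) :
    ∑ i ∈ s, b i * x i ≤ ∑ i ∈ s, b i :=
  sum_le_sum fun i hi => by rcases hx i hi with h | h <;> simp [h, hb i hi]

theorem sum_sqrt_increment_mul_le {ι : Type*} [LinearOrder ι] (s : Finset ι) {σ : ℝ}
    (hσ : 0 ≤ σ) {b x : ι → ℝ} (hb : ∀ i ∈ s, 0 ≤ b i) (hx : ∀ i ∈ s, x i = 0 ∨ x i = 1) :
    ∑ k ∈ s, (√(σ + ∑ j ∈ s with j ≤ k, b j) - √(σ + ∑ j ∈ s with j < k, b j)) * x k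
      ≤ √(σ + ∑ k ∈ s, b k * x k) - √σ := by
  induction s using Finset.induction_on_max with
  | empty => simp
  | insert m s hlt ih =>
    have hm : m ∉ s := fun h => (hlt m h).false
    have hb' : ∀ i ∈ s, 0 ≤ b i := fun i hi => hb i (mem_insert_of_mem hi)
    have hx' : ∀ i ∈ s, x i = 0 ∨ x i = 1 := fun i hi => hx i (mem_insert_of_mem hi)
    have hle_of_mem : ∀ k ∈ s, ({j ∈ insert m s | j ≤ k} : Finset ι) = {j ∈ s | j ≤ k} :=
      fun k hk => by rw [filter_insert, if_neg (hlt k hk).not_ge]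
    have hlt_of_mem : ∀ k ∈ s, ({j ∈ insert m s | j < k} : Finset ι) = {j ∈ s | j < k} :=
      fun k hk => by rw [filter_insert, if_neg (hlt k hk).not_gt]
    have hle_max : ({j ∈ insert m s | j ≤ m} : Finset ι) = insert m s :=
      filter_true_of_mem fun j hj => (mem_insert.1 hj).elim le_of_eq fun h => (hlt j h).le
    have hlt_max : ({j ∈ insert m s | j < m} : Finset ι) = s := by
      rw [filter_insert, if_neg (lt_irrefl m), filter_true_of_mem hlt]
    have hsplit : ∑ k ∈ insert m s, (√(σ + ∑ j ∈ insert m s with j ≤ k, b j)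
          - √(σ + ∑ j ∈ insert m s with j < k, b j)) * x k
        = ∑ k ∈ s, (√(σ + ∑ j ∈ s with j ≤ k, b j) - √(σ + ∑ j ∈ s with j < k, b j)) * x k
          + (√(σ + (b m + ∑ j ∈ s, b j)) - √(σ + ∑ j ∈ s, b j)) * x m := by
      rw [sum_insert hm, hle_max, hlt_max, sum_insert hm, add_comm]
      congr 1
      exact sum_congr rfl fun k hk => by rw [hle_of_mem k hk, hlt_of_mem k hk]
    have hB : 0 ≤ ∑ k ∈ s, b k * x k :=
      sum_nonneg fun k hk => by rcases hx' k hk with h | h <;> simp [h, hb' k hk]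
    have hstep : (√(σ + (b m + ∑ j ∈ s, b j)) - √(σ + ∑ j ∈ s, b j)) * x m
        ≤ √(σ + (b m * x m + ∑ k ∈ s, b k * x k)) - √(σ + ∑ k ∈ s, b k * x k) := by
      rcases hx m (mem_insert_self m s) with h | h
      · simp [h]
      · have hBA := sum_mul_le_sum_of_zero_or_one s hb' hx'
        have := antitoneOn_sqrt_add_sub_sqrt (hb m (mem_insert_self m s))
          (Set.mem_Ici.2 (by positivity : 0 ≤ σ + ∑ k ∈ s, b k * x k))
          (Set.mem_Ici.2 (by linarith : 0 ≤ σ + ∑ k ∈ s, b k)) (by linarith)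
        simp only [h, mul_one] at this ⊢
        rwa [add_comm (b m), add_comm (b m), ← add_assoc, ← add_assoc]
    rw [hsplit, sum_insert hm]
    linarith [ih hb' hx']

theorem sum_mul_sq_le_sum {ι : Type*} (s : Finset ι) {c y : ι → ℝ} (hc : ∀ i ∈ s, 0 ≤ c i)
    (hy : ∀ i ∈ s, 0 ≤ y i ∧ y i ≤ 1) : ∑ i ∈ s, c i * y i ^ 2 ≤ ∑ i ∈ s, c i :=
  sum_le_sum fun i hi => mul_le_of_le_one_right (hc i hi) (pow_le_one₀ (hy i hi).1 (hy i hi).2)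

theorem valid_inequality_L_general
    (n m : ℕ) (σ : ℝ) (a : Fin n → ℝ) (c : Fin m → ℝ)
    (hσ : 0 ≤ σ) (ha : ∀ i, 0 < a i) (hc : ∀ i, 0 < c i)
    (T : Finset (Fin m)) (e : Equiv.Perm (Fin n))
    (x : Fin n → ℝ) (y : Fin m → ℝ) (z : ℝ)
    (hx : ∀ i, x i = 0 ∨ x i = 1) (hy : ∀ i, 0 ≤ y i ∧ y i ≤ 1)
    (hL : Real.sqrt (σ + ∑ i, a i * x i + ∑ i, c i * y i ^ 2) ≤ z) :
    ∑ k, (Real.sqrt ((σ + ∑ i ∈ T, c i)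
            + ∑ j ∈ Finset.univ.filter (fun j => j ≤ k), a (e j))
        - Real.sqrt ((σ + ∑ i ∈ T, c i)
            + ∑ j ∈ Finset.univ.filter (fun j => j < k), a (e j))) * x (e k)
      + Real.sqrt (σ + ∑ i ∈ T, c i * y i ^ 2) ≤ z := by
  have hcT : 0 ≤ ∑ i ∈ T, c i := sum_nonneg fun i _ => (hc i).le
  have hcy : 0 ≤ ∑ i ∈ T, c i * y i ^ 2 := sum_nonneg fun i _ => mul_nonneg (hc i).le (sq_nonneg _)
  have hax : 0 ≤ ∑ i, a i * x i :=
    sum_nonneg fun i _ => by rcases hx i with h | h <;> simp [h, (ha i).le]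
  have htelescope := sum_sqrt_increment_mul_le univ (add_nonneg hσ hcT)
    (b := fun k => a (e k)) (x := fun k => x (e k)) (fun k _ => (ha _).le) (fun k _ => hx _)
  rw [Equiv.sum_comp e fun i => a i * x i] at htelescope
  have hbase : σ + ∑ i ∈ T, c i * y i ^ 2 ≤ σ + ∑ i ∈ T, c i := by
    linarith [sum_mul_sq_le_sum T (fun i _ => (hc i).le) fun i _ => hy i]
  have hrebase := antitoneOn_sqrt_add_sub_sqrt hax (Set.mem_Ici.2 (by positivity))
    (Set.mem_Ici.2 (by positivity)) hbase
  have hsubset : ∑ i ∈ T, c i * y i ^ 2 ≤ ∑ i, c i * y i ^ 2 :=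
    sum_le_sum_of_subset_of_nonneg (subset_univ T) fun i _ _ => mul_nonneg (hc i).le (sq_nonneg _)
  calc _ ≤ √(σ + ∑ i ∈ T, c i * y i ^ 2 + ∑ i, a i * x i) := by
        dsimp only at hrebase
        linarith
    _ ≤ √(σ + ∑ i, a i * x i + ∑ i, c i * y i ^ 2) := sqrt_le_sqrt (by linarith)
    _ ≤ z := hL

/-- **Valid inequalities for the mixed-integer set `L_σ`.**
`L_σ = {(x,y,z) ∈ {0,1}^N × [0,1]^M × ℝ₊ : √(σ + ∑_N a i x i + ∑_M c i y i²) ≤ z}`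
with `σ ≥ 0`, `a i > 0`, `c i > 0`. For every `T ⊆ M` and every permutation `e`
of `N`, with polymatroid coefficients `π` computed starting from
`σ_(0) = σ + c(T)`, every point of `L_σ` satisfies
`π'x + √(σ + ∑_{i∈T} c i y i²) ≤ z`. -/
theorem valid_inequality_L
    (n m : ℕ) (σ : ℝ) (a : Fin n → ℝ) (c : Fin m → ℝ)
    (hσ : 0 ≤ σ) (ha : ∀ i, 0 < a i) (hc : ∀ i, 0 < c i)
    (T : Finset (Fin m)) (e : Equiv.Perm (Fin n))
    (x : Fin n → ℝ) (y : Fin m → ℝ) (z : ℝ)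
    (hx : ∀ i, x i = 0 ∨ x i = 1) (hy : ∀ i, 0 ≤ y i ∧ y i ≤ 1) (hz : 0 ≤ z)
    (hL : Real.sqrt (σ + ∑ i, a i * x i + ∑ i, c i * y i ^ 2) ≤ z) :
    ∑ k, (Real.sqrt ((σ + ∑ i ∈ T, c i)
            + ∑ j ∈ Finset.univ.filter (fun j => j ≤ k), a (e j))
        - Real.sqrt ((σ + ∑ i ∈ T, c i)
            + ∑ j ∈ Finset.univ.filter (fun j => j < k), a (e j))) * x (e k)
      + Real.sqrt (σ + ∑ i ∈ T, c i * y i ^ 2) ≤ z :=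
  valid_inequality_L_general n m σ a c hσ ha hc T e x y z hx hy hL
end

section
/- For any permutation ((1),...,(n)) of N, the following n+1 points belong to F_σ, satisfy the lifted linear polymatroid inequality Σ_i π_(i) x_(i) = z + Σ_i α_(i)(x_(i) − y_(i)) − √σ at equality, and are affinely independent: the point (x,y,z) = (0, 0, √σ), and for each i = 1,...,n the point (x,y,z) = (Σ_{k≤i} e_(k), Σ_{k≤i} e_(k), √σ_(i)). -/
/-!
At a point with `x = y` the `α`-terms vanish, and the coefficients `π_(k)` over the prefix
`{(1), …, (i)}` telescope to `√σ_(i) − √σ = z − √σ`; membership in `F_σ` holds because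
`σ + ∑ a y² = σ_(i) ≤ (√σ_(i))² = z²`. For affine independence, subtract the base point
`(0, 0, √σ)`: read in the order of the permutation, the `x`-parts of the other points are the
rows of a lower unitriangular matrix.
-/

/-- The `n+1` points of the remark after Prop. 4: `(0, 0, √σ)` and, for each
`i ∈ N`, the point `(∑_{k≤i} e_(k), ∑_{k≤i} e_(k), √σ_(i))`, where `e` is the
permutation and `σ_(i) = σ + ∑_{k ≤ i} a_(k)`. -/
noncomputable def tightPoints (n : ℕ) (σ : ℝ) (a : Fin n → ℝ)
    (e : Equiv.Perm (Fin n)) : Fin (n + 1) → (Fin n → ℝ) × (Fin n → ℝ) × ℝ :=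
  Fin.cons ((fun _ => 0), (fun _ => 0), Real.sqrt σ)
    (fun i => ((fun m => if e.symm m ≤ i then 1 else 0),
               (fun m => if e.symm m ≤ i then 1 else 0),
               Real.sqrt (σ + ∑ j ∈ Finset.univ.filter (fun j => j ≤ i), a (e j))))

open Finset

theorem Fin.sum_Iic_sub_Iio {n : ℕ} {G : Type*} [AddCommGroup G] (F : Finset (Fin n) → G)
    (i : Fin n) : ∑ k ∈ Iic i, (F (Iic k) - F (Iio k)) = F (Iic i) - F ∅ := by
  set h : ℕ → G := fun t => F (univ.filter fun l : Fin n => (l : ℕ) < t)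
  have hIic (k : Fin n) : F (Iic k) = h (k + 1) := by
    simp only [h]; congr 1; ext l
    simp only [mem_Iic, mem_filter, mem_univ, true_and, Fin.le_def]; omega
  have hIio (k : Fin n) : F (Iio k) = h k := by
    simp only [h]; congr 1; ext l
    simp only [mem_Iio, mem_filter, mem_univ, true_and, Fin.lt_def]
  have hempty : F ∅ = h 0 := by simp [h]
  have hsum := sum_map (Iic i) Fin.valEmbedding (fun t => h (t + 1) - h t)
  rw [Fin.map_valEmbedding_Iic, ← Nat.range_succ_eq_Iic, sum_range_sub] at hsum
  simpa only [hIic, hIio, hempty, Fin.valEmbedding_apply] using hsum.symm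

theorem linearIndependent_lowerUnitriangular_rows {ι R : Type*} [Fintype ι] [LinearOrder ι]
    [CommRing R] : LinearIndependent R (fun i k : ι => if k ≤ i then (1 : R) else 0) := by
  classical
  apply Matrix.linearIndependent_rows_of_isUnit
    (A := Matrix.of fun i k : ι => if k ≤ i then (1 : R) else 0)
  rw [Matrix.isUnit_iff_isUnit_det, Matrix.det_of_isLowerTriangular]
  · simp
  · intro i k hik
    simp [not_le.2 (OrderDual.toDual_lt_toDual.1 hik)]

theorem AffineIndependent.fin_cons_zero {k V : Type*} [Ring k] [AddCommGroup V] [Module k V]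
    {n : ℕ} {v : Fin n → V} (hv : LinearIndependent k v) :
    AffineIndependent k (Fin.cons 0 v : Fin (n + 1) → V) := by
  rw [affineIndependent_iff_of_fintype]
  intro w hw hcomb
  rw [weightedVSub_eq_linear_combination _ hw, Fin.sum_univ_succ] at hcomb
  simp only [Fin.cons_zero, smul_zero, Fin.cons_succ, zero_add] at hcomb
  have hsucc : ∀ i : Fin n, w i.succ = 0 := Fintype.linearIndependent_iff.1 hv _ hcomb
  have hzero : w 0 = 0 := by simpa [Fin.sum_univ_succ, hsucc] using hw
  exact fun i => Fin.cases hzero hsucc i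

/-- The set `F_σ`. -/
def mixedBinaryConicSet {n : ℕ} (σ : ℝ) (a : Fin n → ℝ) : Set ((Fin n → ℝ) × (Fin n → ℝ) × ℝ) :=
  {p | (∀ i, p.1 i = 0 ∨ p.1 i = 1) ∧ (∀ i, 0 ≤ p.2.1 i ∧ p.2.1 i ≤ p.1 i) ∧ 0 ≤ p.2.2 ∧
    σ + ∑ i, a i * p.2.1 i ^ 2 ≤ p.2.2 ^ 2}

section tightPoints

variable {n : ℕ} (σ : ℝ) (a : Fin n → ℝ) (e : Equiv.Perm (Fin n))

theorem tightPoints_mem_mixedBinaryConicSet (j : Fin (n + 1)) :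
    tightPoints n σ a e j ∈ mixedBinaryConicSet σ a := by
  refine Fin.cases ?_ (fun i => ?_) j
  · simp [tightPoints, mixedBinaryConicSet, Real.sq_sqrt']
  · simp only [tightPoints, Fin.cons_succ, mixedBinaryConicSet, Set.mem_ofPred_eq]
    refine ⟨fun m => by split_ifs <;> simp, fun m => by split_ifs <;> simp,
      Real.sqrt_nonneg _, ?_⟩
    have hquad : ∑ m, a m * (if e.symm m ≤ i then (1 : ℝ) else 0) ^ 2
        = ∑ l ∈ univ.filter (· ≤ i), a (e l) := by
      rw [← Equiv.sum_comp e, sum_filter]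
      simp
    rw [hquad, Real.sq_sqrt']
    exact le_max_left _ _

theorem tightPoints_lifted_polymatroid_eq (j : Fin (n + 1)) :
    ∑ k, (Real.sqrt (σ + ∑ l ∈ Finset.univ.filter (fun l => l ≤ k), a (e l))
            - Real.sqrt (σ + ∑ l ∈ Finset.univ.filter (fun l => l < k), a (e l)))
              * (tightPoints n σ a e j).1 (e k)
          = (tightPoints n σ a e j).2.2
            + ∑ k, (a (e k)
                / Real.sqrt (σ + ∑ l ∈ Finset.univ.filter (fun l => l ≤ k), a (e l)))
              * ((tightPoints n σ a e j).1 (e k) - (tightPoints n σ a e j).2.1 (e k))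
            - Real.sqrt σ := by
  refine Fin.cases ?_ (fun i => ?_) j
  · simp [tightPoints]
  · simp only [tightPoints, Fin.cons_succ, Equiv.symm_apply_apply, sub_self, mul_zero,
      sum_const_zero, add_zero, mul_ite, mul_one, ← sum_filter, filter_ge_eq_Iic,
      filter_gt_eq_Iio]
    simpa using Fin.sum_Iic_sub_Iio (fun s => Real.sqrt (σ + ∑ l ∈ s, a (e l))) i

theorem tightPoints_affineIndependent : AffineIndependent ℝ (tightPoints n σ a e) := by
  let f : (Fin n → ℝ) × (Fin n → ℝ) × ℝ →ₗ[ℝ] Fin n → ℝ :=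
    LinearMap.funLeft ℝ ℝ e ∘ₗ LinearMap.fst ℝ _ _
  refine AffineIndependent.of_comp f.toAffineMap ?_
  convert AffineIndependent.fin_cons_zero
    (linearIndependent_lowerUnitriangular_rows (ι := Fin n) (R := ℝ)) using 1
  ext j k
  refine Fin.cases ?_ (fun i => ?_) j <;> simp [f, tightPoints, LinearMap.funLeft]

end tightPoints

theorem lifted_linear_polymatroid_tight_general
    (n : ℕ) (σ : ℝ) (a : Fin n → ℝ)
    (e : Equiv.Perm (Fin n)) :
    (∀ j : Fin (n + 1),
        (∀ i, (tightPoints n σ a e j).1 i = 0 ∨ (tightPoints n σ a e j).1 i = 1) ∧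
        (∀ i, 0 ≤ (tightPoints n σ a e j).2.1 i ∧
              (tightPoints n σ a e j).2.1 i ≤ (tightPoints n σ a e j).1 i) ∧
        0 ≤ (tightPoints n σ a e j).2.2 ∧
        σ + ∑ i, a i * (tightPoints n σ a e j).2.1 i ^ 2
          ≤ (tightPoints n σ a e j).2.2 ^ 2) ∧
    (∀ j : Fin (n + 1),
        ∑ k, (Real.sqrt (σ + ∑ l ∈ Finset.univ.filter (fun l => l ≤ k), a (e l))
            - Real.sqrt (σ + ∑ l ∈ Finset.univ.filter (fun l => l < k), a (e l)))
              * (tightPoints n σ a e j).1 (e k)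
          = (tightPoints n σ a e j).2.2
            + ∑ k, (a (e k)
                / Real.sqrt (σ + ∑ l ∈ Finset.univ.filter (fun l => l ≤ k), a (e l)))
              * ((tightPoints n σ a e j).1 (e k) - (tightPoints n σ a e j).2.1 (e k))
            - Real.sqrt σ) ∧
    AffineIndependent ℝ (tightPoints n σ a e) :=
  ⟨tightPoints_mem_mixedBinaryConicSet σ a e, tightPoints_lifted_polymatroid_eq σ a e,
    tightPoints_affineIndependent σ a e⟩

/-- **Tightness of the lifted linear polymatroid inequality.** For any
permutation `e` of `N`, the `n+1` points `tightPoints` belong to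
`F_σ = {(x,y,z) ∈ {0,1}^N × ℝ₊^N × ℝ₊ : σ + ∑ a i y i² ≤ z², 0 ≤ y ≤ x}`, satisfy the
lifted inequality `∑ π_(i) x_(i) = z + ∑ α_(i)(x_(i) − y_(i)) − √σ` at equality,
and are affinely independent. -/
theorem lifted_linear_polymatroid_tight
    (n : ℕ) (σ : ℝ) (a : Fin n → ℝ) (hσ : 0 ≤ σ) (ha : ∀ i, 0 < a i)
    (e : Equiv.Perm (Fin n)) :
    (∀ j : Fin (n + 1),
        (∀ i, (tightPoints n σ a e j).1 i = 0 ∨ (tightPoints n σ a e j).1 i = 1) ∧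
        (∀ i, 0 ≤ (tightPoints n σ a e j).2.1 i ∧
              (tightPoints n σ a e j).2.1 i ≤ (tightPoints n σ a e j).1 i) ∧
        0 ≤ (tightPoints n σ a e j).2.2 ∧
        σ + ∑ i, a i * (tightPoints n σ a e j).2.1 i ^ 2
          ≤ (tightPoints n σ a e j).2.2 ^ 2) ∧
    (∀ j : Fin (n + 1),
        ∑ k, (Real.sqrt (σ + ∑ l ∈ Finset.univ.filter (fun l => l ≤ k), a (e l))
            - Real.sqrt (σ + ∑ l ∈ Finset.univ.filter (fun l => l < k), a (e l)))
              * (tightPoints n σ a e j).1 (e k)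
          = (tightPoints n σ a e j).2.2
            + ∑ k, (a (e k)
                / Real.sqrt (σ + ∑ l ∈ Finset.univ.filter (fun l => l ≤ k), a (e l)))
              * ((tightPoints n σ a e j).1 (e k) - (tightPoints n σ a e j).2.1 (e k))
            - Real.sqrt σ) ∧
    AffineIndependent ℝ (tightPoints n σ a e) :=
  lifted_linear_polymatroid_tight_general n σ a e
end

section
/- For S ⊆ N and a permutation ((1),...,(|S|)) of S, the following n+1 points belong to F, satisfy the inequality (π_S'x_S − α_S'(x_S − y_S))² + Σ_{i∈N∖S} a_i y_i² ≤ z² at equality, and are affinely independent: (x,y,z) = (0,0,0); (x,y,z) = (Σ_{k≤i} e_(k), Σ_{k≤i} e_(k), √σ_{S(i)}) for i = 1,...,|S|; and (x,y,z) = (e_i, e_i, √a_i) for each i ∈ N∖S. -/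
/-!
Every point has `y = x ∈ {0,1}^N`, so the `α`-term of the inequality vanishes. At the prefix point
of position `p` the `π`-coefficients telescope to `√σ_{S(p)}`, and both sides of the inequality, as
well as `∑ aᵢ yᵢ²`, equal `σ_{S(p)}`; at `eᵢ` with `i ∉ S` they all equal `aᵢ`.

For affine independence it suffices that the `x`-parts of the `n` nonzero points are linearly
independent. In a vanishing combination, the coordinate `i ∉ S` isolates the coefficient of `eᵢ`,
and the coordinate `(q)` is the sum of the coefficients of the prefix points of positions `≥ q`;
these tail sums all vanish only if every coefficient does.
-/

open Finset in
/-- The `n+1` points of the remark after inequality (8): `(0,0,0)`; for each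
`i = 1,...,|S|` the point `(∑_{k≤i} e_(k), ∑_{k≤i} e_(k), √σ_{S(i)})` (here indexed
by the element of `S` in position `i` of the permutation `e`); and `(e_i, e_i, √a_i)`
for each `i ∈ N∖S`. -/
noncomputable def tightPointsI (n : ℕ) (a : Fin n → ℝ) (S : Finset (Fin n))
    (e : Fin S.card ≃ {i // i ∈ S}) :
    Option (Fin n) → (Fin n → ℝ) × (Fin n → ℝ) × ℝ
  | none => ((fun _ => 0), (fun _ => 0), 0)
  | some i =>
    if h : i ∈ S then
      ((fun m => if hm : m ∈ S then
          (if e.symm ⟨m, hm⟩ ≤ e.symm ⟨i, h⟩ then 1 else 0) else 0),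
       (fun m => if hm : m ∈ S then
          (if e.symm ⟨m, hm⟩ ≤ e.symm ⟨i, h⟩ then 1 else 0) else 0),
       Real.sqrt (∑ j ∈ univ.filter (fun j => j ≤ e.symm ⟨i, h⟩), a (e j)))
    else
      ((fun m => if m = i then 1 else 0), (fun m => if m = i then 1 else 0),
       Real.sqrt (a i))

open Finset

section Order

variable {α M : Type*} [LinearOrder α] [AddCommGroup M]

theorem Finset.sum_Iic_sub_Iio [LocallyFiniteOrderBot α] [WellFoundedLT α] (g : Finset α → M)
    (p : α) :
    ∑ k ∈ Iic p, (g (Iic k) - g (Iio k)) = g (Iic p) - g ∅ := by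
  induction p using WellFoundedLT.induction with
  | _ p ih =>
  rw [← add_sum_erase _ _ (mem_Iic.2 le_rfl), Iic_erase]
  rcases (Iio p).eq_empty_or_nonempty with hp | hp
  · rw [hp, sum_empty, add_zero]
  · have hq : Iio p = Iic ((Iio p).max' hp) := by
      ext x
      exact ⟨fun hx => mem_Iic.2 (le_max' _ x hx),
        fun hx => mem_Iio.2 ((mem_Iic.1 hx).trans_lt (mem_Iio.1 (max'_mem _ hp)))⟩
    rw [hq, ih _ (mem_Iio.1 (max'_mem _ hp))]
    abel

theorem eq_zero_of_sum_Ici_eq_zero [LocallyFiniteOrderTop α] [WellFoundedGT α] {h : α → M}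
    (hsum : ∀ q, ∑ k ∈ Ici q, h k = 0) (q : α) : h q = 0 := by
  induction q using WellFoundedGT.induction with
  | _ q ih =>
  rw [← hsum q, ← add_sum_erase _ _ (mem_Ici.2 le_rfl), Ici_erase,
    sum_eq_zero fun k hk => ih k (mem_Ioi.1 hk), add_zero]

end Order

theorem Fintype.sum_eq_sum_comp_of_eq_zero {ι κ M : Type*} [Fintype ι] [Fintype κ]
    [AddCommMonoid M] {S : Finset ι} (e : κ ≃ S) {f : ι → M} (hf : ∀ i ∉ S, f i = 0) :
    ∑ i, f i = ∑ k, f (e k) := by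
  rw [← Finset.sum_subset (subset_univ S) fun i _ hi => hf i hi, ← sum_coe_sort S, ← e.sum_comp]

theorem affineIndependent_option_iff {k V ι : Type*} [Ring k] [AddCommGroup V] [Module k V]
    {p : Option ι → V} (h0 : p none = 0) :
    AffineIndependent k p ↔ LinearIndependent k fun i => p (some i) := by
  rw [affineIndependent_iff_linearIndependent_vsub k p none, ← linearIndependent_equiv
    ((Equiv.subtypeEquivRight fun _ => Option.ne_none_iff_isSome).trans
      (Equiv.optionIsSomeEquiv ι)).symm]
  simp [h0, Function.comp_def]

section PrefixIndicator

variable {ι : Type*} [DecidableEq ι] {S : Finset ι} (e : Fin S.card ≃ S) (p : Fin S.card)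

def prefixIndicator (m : ι) : ℝ :=
  if hm : m ∈ S then if e.symm ⟨m, hm⟩ ≤ p then 1 else 0 else 0

theorem prefixIndicator_apply_perm (k : Fin S.card) :
    prefixIndicator e p (e k) = if k ≤ p then 1 else 0 := by
  simp [prefixIndicator]

theorem prefixIndicator_of_notMem {m : ι} (hm : m ∉ S) : prefixIndicator e p m = 0 := by
  simp [prefixIndicator, hm]

theorem prefixIndicator_eq_zero_or_one (m : ι) :
    prefixIndicator e p m = 0 ∨ prefixIndicator e p m = 1 := by
  unfold prefixIndicator
  split_ifs <;> simp

theorem sum_mul_prefixIndicator_perm (f : Fin S.card → ℝ) :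
    ∑ k, f k * prefixIndicator e p (e k) = ∑ k ∈ Iic p, f k := by
  simp_rw [prefixIndicator_apply_perm, mul_ite, mul_one, mul_zero, ← sum_filter,
    filter_ge_eq_Iic]

theorem sum_mul_prefixIndicator_sq [Fintype ι] (f : ι → ℝ) :
    ∑ m, f m * prefixIndicator e p m ^ 2 = ∑ k ∈ Iic p, f (e k) := by
  have hsq : ∀ m, prefixIndicator e p m ^ 2 = prefixIndicator e p m := fun m => by
    rcases prefixIndicator_eq_zero_or_one e p m with h | h <;> simp [h]
  simp_rw [hsq]
  rw [Fintype.sum_eq_sum_comp_of_eq_zero e fun m hm => by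
    simp [prefixIndicator_of_notMem e p hm], sum_mul_prefixIndicator_perm]

end PrefixIndicator

section LiftedInequality

variable {ι : Type*} [Fintype ι] (a : ι → ℝ)

def liftedSetF : Set ((ι → ℝ) × (ι → ℝ) × ℝ) :=
  {v | (∀ i, v.1 i = 0 ∨ v.1 i = 1) ∧ (∀ i, 0 ≤ v.2.1 i ∧ v.2.1 i ≤ v.1 i) ∧ 0 ≤ v.2.2 ∧
    ∑ i, a i * v.2.1 i ^ 2 ≤ v.2.2 ^ 2}

theorem mk_mem_liftedSetF {x : ι → ℝ} {z : ℝ} (hx : ∀ i, x i = 0 ∨ x i = 1) (hz : 0 ≤ z)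
    (h : ∑ i, a i * x i ^ 2 = z ^ 2) : (x, x, z) ∈ liftedSetF a :=
  ⟨hx, fun i => ⟨by rcases hx i with h | h <;> simp [h], le_rfl⟩, hz, h.le⟩

variable [DecidableEq ι] (S : Finset ι) (e : Fin S.card ≃ S)

/-- `k` runs over the positions of the order `e` on `S`; the two filtered sums are `σ_{S(k)}` and
`σ_{S(k-1)}`, so the coefficients are `π_{S,(k)}` and `α_{S,(k)}`. -/
noncomputable def liftedPolymatroidLHS (v : (ι → ℝ) × (ι → ℝ) × ℝ) : ℝ :=
  (∑ k, (√(∑ l ∈ univ.filter (fun l => l ≤ k), a (e l))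
        - √(∑ l ∈ univ.filter (fun l => l < k), a (e l))) * v.1 (e k)
    - ∑ k, (a (e k) / √(∑ l ∈ univ.filter (fun l => l ≤ k), a (e l)))
        * (v.1 (e k) - v.2.1 (e k))) ^ 2
    + ∑ i ∈ univ \ S, a i * v.2.1 i ^ 2

theorem liftedPolymatroidLHS_mk_self (x : ι → ℝ) (z : ℝ) :
    liftedPolymatroidLHS a S e (x, x, z) =
      (∑ k, (√(∑ l ∈ Iic k, a (e l)) - √(∑ l ∈ Iio k, a (e l))) * x (e k)) ^ 2
        + ∑ i ∈ univ \ S, a i * x i ^ 2 := by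
  simp [liftedPolymatroidLHS, filter_ge_eq_Iic, filter_gt_eq_Iio]

theorem liftedPolymatroidLHS_prefixIndicator (ha : ∀ i, 0 ≤ a i) (p : Fin S.card) (z : ℝ) :
    liftedPolymatroidLHS a S e (prefixIndicator e p, prefixIndicator e p, z) =
      ∑ l ∈ Iic p, a (e l) := by
  have hout : ∑ i ∈ univ \ S, a i * prefixIndicator e p i ^ 2 = 0 :=
    sum_eq_zero fun i hi => by simp [prefixIndicator_of_notMem e p (mem_sdiff.1 hi).2]
  rw [liftedPolymatroidLHS_mk_self, sum_mul_prefixIndicator_perm,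
    sum_Iic_sub_Iio (fun s => √(∑ l ∈ s, a (e l))), hout, sum_empty, Real.sqrt_zero, sub_zero,
    add_zero, Real.sq_sqrt (sum_nonneg fun l _ => ha (e l))]

theorem liftedPolymatroidLHS_single {i : ι} (hi : i ∉ S) (z : ℝ) :
    liftedPolymatroidLHS a S e (Pi.single i 1, Pi.single i 1, z) = a i := by
  have hperm : ∀ k, (Pi.single i 1 : ι → ℝ) (e k) = 0 := fun k =>
    Pi.single_eq_of_ne (fun h : (e k : ι) = i => hi (h ▸ (e k).2)) 1
  rw [liftedPolymatroidLHS_mk_self]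
  simp [hperm, Pi.single_apply, hi]

end LiftedInequality

section TightPoints

variable {n : ℕ} {a : Fin n → ℝ} {S : Finset (Fin n)} {e : Fin S.card ≃ S}

theorem tightPointsI_some_perm (p : Fin S.card) :
    tightPointsI n a S e (some (e p)) =
      (prefixIndicator e p, prefixIndicator e p, √(∑ l ∈ Iic p, a (e l))) := by
  unfold tightPointsI prefixIndicator
  simp [filter_ge_eq_Iic]

theorem tightPointsI_some_of_notMem {i : Fin n} (hi : i ∉ S) :
    tightPointsI n a S e (some i) = (Pi.single i 1, Pi.single i 1, √(a i)) := by
  simp [tightPointsI, hi, funext_iff, Pi.single_apply]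

theorem tightPointsI_cases (j : Option (Fin n)) :
    tightPointsI n a S e j = (0, 0, 0) ∨
      (∃ p, tightPointsI n a S e j =
        (prefixIndicator e p, prefixIndicator e p, √(∑ l ∈ Iic p, a (e l)))) ∨
      ∃ i ∉ S, tightPointsI n a S e j = (Pi.single i 1, Pi.single i 1, √(a i)) := by
  rcases j with _ | i
  · exact Or.inl rfl
  by_cases hi : i ∈ S
  · obtain ⟨p, rfl⟩ : ∃ p, (e p : Fin n) = i := ⟨e.symm ⟨i, hi⟩, by simp⟩
    exact Or.inr (Or.inl ⟨p, tightPointsI_some_perm p⟩)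
  · exact Or.inr (Or.inr ⟨i, hi, tightPointsI_some_of_notMem hi⟩)

theorem tightPointsI_mem_liftedSetF (ha : ∀ i, 0 ≤ a i) (j : Option (Fin n)) :
    tightPointsI n a S e j ∈ liftedSetF a := by
  rcases tightPointsI_cases j with h | ⟨p, h⟩ | ⟨i, -, h⟩ <;> rw [h]
  · exact mk_mem_liftedSetF a (fun _ => Or.inl rfl) le_rfl (by simp)
  · refine mk_mem_liftedSetF a (prefixIndicator_eq_zero_or_one e p) (Real.sqrt_nonneg _) ?_
    rw [sum_mul_prefixIndicator_sq, Real.sq_sqrt (sum_nonneg fun l _ => ha (e l))]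
  · refine mk_mem_liftedSetF a (fun m => ?_) (Real.sqrt_nonneg _) ?_
    · by_cases hm : m = i <;> simp [hm]
    · simp [Pi.single_apply, Real.sq_sqrt (ha i)]

theorem liftedPolymatroidLHS_tightPointsI (ha : ∀ i, 0 ≤ a i) (j : Option (Fin n)) :
    liftedPolymatroidLHS a S e (tightPointsI n a S e j) = (tightPointsI n a S e j).2.2 ^ 2 := by
  rcases tightPointsI_cases j with h | ⟨p, h⟩ | ⟨i, hi, h⟩ <;> rw [h]
  · simp [liftedPolymatroidLHS]
  · rw [liftedPolymatroidLHS_prefixIndicator a S e ha,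
      Real.sq_sqrt (sum_nonneg fun l _ => ha (e l))]
  · rw [liftedPolymatroidLHS_single a S e hi, Real.sq_sqrt (ha i)]

theorem tightPointsI_fst_apply_of_notMem {m : Fin n} (hm : m ∉ S) (i : Fin n) :
    (tightPointsI n a S e (some i)).1 m = if i = m then 1 else 0 := by
  by_cases hi : i ∈ S
  · obtain ⟨p, rfl⟩ : ∃ p, (e p : Fin n) = i := ⟨e.symm ⟨i, hi⟩, by simp⟩
    rw [tightPointsI_some_perm, if_neg (ne_of_mem_of_not_mem hi hm)]
    exact prefixIndicator_of_notMem e p hm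
  · simp [tightPointsI_some_of_notMem hi, Pi.single_apply, eq_comm]

theorem linearIndependent_tightPointsI_fst :
    LinearIndependent ℝ fun i => (tightPointsI n a S e (some i)).1 := by
  rw [Fintype.linearIndependent_iff]
  intro g hg
  have hcoord : ∀ m, ∑ i, g i * (tightPointsI n a S e (some i)).1 m = 0 := fun m => by
    simpa using congrFun hg m
  have hout : ∀ i ∉ S, g i = 0 := fun i hi => by
    simpa [tightPointsI_fst_apply_of_notMem hi] using hcoord i
  have hin : ∀ k, g (e k) = 0 := eq_zero_of_sum_Ici_eq_zero fun q => by
    rw [← hcoord (e q), Fintype.sum_eq_sum_comp_of_eq_zero e fun i hi => by simp [hout i hi]]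
    simp_rw [tightPointsI_some_perm, prefixIndicator_apply_perm, mul_ite, mul_one, mul_zero,
      ← sum_filter, filter_le_eq_Ici]
  intro i
  by_cases hi : i ∈ S
  · simpa using hin (e.symm ⟨i, hi⟩)
  · exact hout i hi

theorem affineIndependent_tightPointsI : AffineIndependent ℝ (tightPointsI n a S e) :=
  (affineIndependent_option_iff rfl).2
    (linearIndependent_tightPointsI_fst.of_comp (LinearMap.fst ℝ _ _))

end TightPoints

/-- **Tightness of the lifted nonlinear polymatroid inequality I.** For `S ⊆ N`
and a permutation `e` of `S`, the `n+1` points `tightPointsI` belong to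
`F = {(x,y,z) ∈ {0,1}^N × ℝ₊^N × ℝ₊ : ∑ a i y i² ≤ z², 0 ≤ y ≤ x}`, satisfy
`(π_S'x_S − α_S'(x_S − y_S))² + ∑_{i∈N∖S} a i y i² = z²`, and are affinely
independent. -/
theorem lifted_nonlinear_polymatroid_I_tight
    (n : ℕ) (a : Fin n → ℝ) (ha : ∀ i, 0 < a i)
    (S : Finset (Fin n)) (e : Fin S.card ≃ {i // i ∈ S}) :
    (∀ j : Option (Fin n),
        (∀ i, (tightPointsI n a S e j).1 i = 0 ∨ (tightPointsI n a S e j).1 i = 1) ∧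
        (∀ i, 0 ≤ (tightPointsI n a S e j).2.1 i ∧
              (tightPointsI n a S e j).2.1 i ≤ (tightPointsI n a S e j).1 i) ∧
        0 ≤ (tightPointsI n a S e j).2.2 ∧
        ∑ i, a i * (tightPointsI n a S e j).2.1 i ^ 2
          ≤ (tightPointsI n a S e j).2.2 ^ 2) ∧
    (∀ j : Option (Fin n),
        (∑ k, (Real.sqrt (∑ l ∈ Finset.univ.filter (fun l => l ≤ k), a (e l))
              - Real.sqrt (∑ l ∈ Finset.univ.filter (fun l => l < k), a (e l)))
                * (tightPointsI n a S e j).1 (e k)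
          - ∑ k, (a (e k)
                / Real.sqrt (∑ l ∈ Finset.univ.filter (fun l => l ≤ k), a (e l)))
                * ((tightPointsI n a S e j).1 (e k)
                    - (tightPointsI n a S e j).2.1 (e k))) ^ 2
          + ∑ i ∈ Finset.univ \ S, a i * (tightPointsI n a S e j).2.1 i ^ 2
          = (tightPointsI n a S e j).2.2 ^ 2) ∧
    AffineIndependent ℝ (tightPointsI n a S e) := by
  have ha : ∀ i, 0 ≤ a i := fun i => (ha i).le
  exact ⟨tightPointsI_mem_liftedSetF ha, liftedPolymatroidLHS_tightPointsI ha,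
    affineIndependent_tightPointsI⟩
end

section
/- If ỹ is an optimal solution to (COPT), then ỹ_i ≥ ỹ_k for all 1 ≤ i < k ≤ n; that is, the coordinates of an optimal solution are nonincreasing in the given ordering. -/
/-!
If `y i < y k` for some `i < k`, move `y i` up by `t * 2 a k y k` and `y k` down by
`t * a i (y i + y k)`. To first order in `t` this strictly decreases `∑ a j y j ^ 2`, and
since `c i a k ≤ c k a i` and `c k < 0` it strictly decreases `∑ c j y j` as well; so for small
`t > 0` the perturbed point is feasible and strictly better, contradicting optimality.
-/

open Filter Topology Function Set

theorem Finset.sum_apply_update {ι α M : Type*} [Fintype ι] [DecidableEq ι] [AddCommGroup M]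
    (φ : ι → α → M) (y : ι → α) (i : ι) (t : α) :
    ∑ j, φ j (update y i t j) = ∑ j, φ j (y j) + (φ i t - φ i (y i)) := by
  rw [← add_sum_erase _ _ (mem_univ i), ← add_sum_erase _ _ (mem_univ i), update_self,
    sum_congr rfl fun j hj => by rw [update_of_ne (ne_of_mem_erase hj)]]
  abel

theorem exists_pair_quadratic_le_linear_lt {ai ak ci ck yi yk : ℝ}
    (hai : 0 < ai) (hak : 0 < ak) (hck : ck < 0) (hratio : ci / ai ≤ ck / ak)
    (hyi : 0 ≤ yi) (hlt : yi < yk) (hyk : yk ≤ 1) :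
    ∃ ui uk : ℝ, (0 ≤ ui ∧ ui ≤ 1) ∧ (0 ≤ uk ∧ uk ≤ 1) ∧
      ai * ui ^ 2 + ak * uk ^ 2 ≤ ai * yi ^ 2 + ak * yk ^ 2 ∧
      ci * ui + ck * uk < ci * yi + ck * yk := by
  have hcross : ci * ak ≤ ck * ai := (div_le_div_iff₀ hai hak).1 hratio
  have hyk0 : 0 < yk := hyi.trans_lt hlt
  set p := 2 * ak * yk
  set q := ai * (yi + yk)
  have hp : 0 ≤ p := by positivity
  have hq : 0 ≤ q := by positivity
  have hquad : ai * yi * p - ak * yk * q < 0 := by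
    have : 0 < ai * ak * yk * (yk - yi) := mul_pos (by positivity) (sub_pos.2 hlt)
    linarith
  have hlin : ci * p - ck * q < 0 := by
    nlinarith [mul_le_mul_of_nonneg_right hcross (by positivity : 0 ≤ 2 * yk)]
  have hsmall : ∀ᶠ t in 𝓝 (0 : ℝ), yi + t * p < 1 ∧ 0 < yk - t * q ∧
      2 * (ai * yi * p - ak * yk * q) + t * (ai * p ^ 2 + ak * q ^ 2) < 0 := by
    refine ((Continuous.tendsto (by fun_prop) 0).eventually_lt_const ?_).and
      (((Continuous.tendsto (by fun_prop) 0).eventually_const_lt ?_).and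
        ((Continuous.tendsto (by fun_prop) 0).eventually_lt_const ?_)) <;> simp <;> linarith
  obtain ⟨t, ⟨hi1, hk0, hstep⟩, ht : 0 < t⟩ :=
    ((hsmall.filter_mono nhdsWithin_le_nhds).and
      (self_mem_nhdsWithin : Ioi (0 : ℝ) ∈ 𝓝[>] 0)).exists
  refine ⟨yi + t * p, yk - t * q, ⟨by positivity, hi1.le⟩, ⟨hk0.le, by nlinarith⟩,
    ?_, ?_⟩
  · nlinarith [mul_neg_of_pos_of_neg ht hstep]
  · nlinarith [mul_neg_of_pos_of_neg ht hlin]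

/-- **Monotone structure of optimal solutions of (COPT).**
(COPT) is `min { ∑ c̃ i y i + √(∑ a i y i²) : 0 ≤ y ≤ 1 }` with `a i > 0`,
`c̃ i < 0`, and indices sorted so that `c̃ i / a i` is nondecreasing. If `ỹ` is
optimal, then `ỹ i ≥ ỹ k` whenever `i < k`. -/
theorem copt_monotone
    (n : ℕ) (a c : Fin n → ℝ) (ha : ∀ i, 0 < a i) (hc : ∀ i, c i < 0)
    (hsort : ∀ i j : Fin n, i ≤ j → c i / a i ≤ c j / a j)
    (y : Fin n → ℝ) (hy : ∀ i, 0 ≤ y i ∧ y i ≤ 1)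
    (hopt : ∀ y' : Fin n → ℝ, (∀ i, 0 ≤ y' i ∧ y' i ≤ 1) →
      ∑ i, c i * y i + Real.sqrt (∑ i, a i * y i ^ 2)
        ≤ ∑ i, c i * y' i + Real.sqrt (∑ i, a i * y' i ^ 2)) :
    ∀ i k : Fin n, i < k → y k ≤ y i := by
  intro i k hik
  by_contra! hlt
  obtain ⟨ui, uk, hui, huk, hquad, hlin⟩ := exists_pair_quadratic_le_linear_lt (ha i) (ha k)
    (hc k) (hsort i k hik.le) (hy i).1 hlt (hy k).2
  set y' := update (update y i ui) k uk
  have hfeas : ∀ j, 0 ≤ y' j ∧ y' j ≤ 1 := by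
    refine (forall_update_iff _ (fun _ x => 0 ≤ x ∧ x ≤ 1)).2 ⟨huk, fun j _ => ?_⟩
    exact (forall_update_iff _ (fun _ x => 0 ≤ x ∧ x ≤ 1)).2 ⟨hui, fun j _ => hy j⟩ j
  have hsum (φ : Fin n → ℝ → ℝ) :
      ∑ j, φ j (y' j) = ∑ j, φ j (y j) + (φ i ui - φ i (y i)) + (φ k uk - φ k (y k)) := by
    rw [Finset.sum_apply_update, Finset.sum_apply_update, update_of_ne hik.ne']
  have hopt' := hopt y' hfeas
  rw [hsum (fun j x => c j * x), hsum (fun j x => a j * x ^ 2)] at hopt'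
  have hsqrt := Real.sqrt_le_sqrt (show ∑ j, a j * y j ^ 2 + (a i * ui ^ 2 - a i * y i ^ 2)
      + (a k * uk ^ 2 - a k * y k ^ 2) ≤ ∑ j, a j * y j ^ 2 by linarith)
  linarith
end

section
/- If −c̃_i > a_i/√(Σ_{j∈N} a_j) for every i ∈ N, then the all-ones vector ỹ = (1,1,...,1) is an optimal solution to (COPT). -/
/-!
The map `y ↦ √(∑ a i * y i ^ 2)` is convex, and its gradient at the all-ones vector is
`a / √(∑ a)`. The supporting-hyperplane inequality there is weighted Cauchy–Schwarz,
`∑ a i * y i ≤ √(∑ a) * √(∑ a i * y i ^ 2)`. The hypothesis `a i / √(∑ a) < -c i` says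
that lowering any coordinate below `1` loses more in the linear part than the gradient of
the square root can gain back.
-/

open Finset

theorem sq_sum_mul_le_sum_mul_sum_mul_sq {ι : Type*} (s : Finset ι) (a y : ι → ℝ)
    (ha : ∀ i ∈ s, 0 ≤ a i) :
    (∑ i ∈ s, a i * y i) ^ 2 ≤ (∑ i ∈ s, a i) * ∑ i ∈ s, a i * y i ^ 2 :=
  sum_sq_le_sum_mul_sum_of_sq_le_mul s ha (fun i hi => mul_nonneg (ha i hi) (sq_nonneg _))
    fun i _ => le_of_eq (by ring)

theorem sum_mul_div_sqrt_sum_le_sqrt_sum_mul_sq {ι : Type*} (s : Finset ι) (a y : ι → ℝ)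
    (ha : ∀ i ∈ s, 0 ≤ a i) :
    (∑ i ∈ s, a i * y i) / √(∑ i ∈ s, a i) ≤ √(∑ i ∈ s, a i * y i ^ 2) := by
  refine div_le_of_le_mul₀ (Real.sqrt_nonneg _) (Real.sqrt_nonneg _) ?_
  calc ∑ i ∈ s, a i * y i ≤ |∑ i ∈ s, a i * y i| := le_abs_self _
    _ ≤ √((∑ i ∈ s, a i) * ∑ i ∈ s, a i * y i ^ 2) :=
      Real.abs_le_sqrt (sq_sum_mul_le_sum_mul_sum_mul_sq s a y ha)
    _ = √(∑ i ∈ s, a i * y i ^ 2) * √(∑ i ∈ s, a i) := by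
      rw [Real.sqrt_mul' _ (sum_nonneg fun i hi => mul_nonneg (ha i hi) (sq_nonneg _)),
        mul_comm]

theorem sum_div_sqrt_sum_mul_one_sub {ι : Type*} (s : Finset ι) (a y : ι → ℝ) :
    ∑ i ∈ s, a i / √(∑ j ∈ s, a j) * (1 - y i)
      = √(∑ i ∈ s, a i) - (∑ i ∈ s, a i * y i) / √(∑ i ∈ s, a i) := by
  simp only [div_mul_eq_mul_div, mul_sub, mul_one, ← sum_div, sum_sub_distrib,
    Real.div_sqrt]

theorem copt_all_ones_optimal_general
    (n : ℕ) (a c : Fin n → ℝ) (ha : ∀ i, 0 < a i)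
    (hbig : ∀ i, a i / Real.sqrt (∑ j, a j) < -(c i)) :
    ∀ y : Fin n → ℝ, (∀ i, 0 ≤ y i ∧ y i ≤ 1) →
      ∑ i, c i * (1 : ℝ) + Real.sqrt (∑ i, a i * (1 : ℝ) ^ 2)
        ≤ ∑ i, c i * y i + Real.sqrt (∑ i, a i * y i ^ 2) := by
  intro y hy
  have hlinear : ∑ i, a i / √(∑ j, a j) * (1 - y i) ≤ ∑ i, -c i * (1 - y i) :=
    sum_le_sum fun i _ => mul_le_mul_of_nonneg_right (hbig i).le (sub_nonneg.2 (hy i).2)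
  have hsupport := sum_mul_div_sqrt_sum_le_sqrt_sum_mul_sq univ a y fun i _ => (ha i).le
  have hcost : ∑ i, -c i * (1 - y i) = ∑ i, c i * y i - ∑ i, c i := by
    simp only [neg_mul, mul_sub, mul_one, sum_sub_distrib, sum_neg_distrib]
    ring
  rw [sum_div_sqrt_sum_mul_one_sub, hcost] at hlinear
  simp only [mul_one, one_pow]
  linarith

/-- **All-ones optimality for (COPT).** (COPT) is
`min { ∑ c̃ i y i + √(∑ a i y i²) : 0 ≤ y ≤ 1 }` with `a i > 0`, `c̃ i < 0`.
If `−c̃ i > a i / √(∑ j, a j)` for every `i`, then the all-ones vector is optimal. -/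
theorem copt_all_ones_optimal
    (n : ℕ) (a c : Fin n → ℝ) (ha : ∀ i, 0 < a i) (hc : ∀ i, c i < 0)
    (hbig : ∀ i, a i / Real.sqrt (∑ j, a j) < -(c i)) :
    ∀ y : Fin n → ℝ, (∀ i, 0 ≤ y i ∧ y i ≤ 1) →
      ∑ i, c i * (1 : ℝ) + Real.sqrt (∑ i, a i * (1 : ℝ) ^ 2)
        ≤ ∑ i, c i * y i + Real.sqrt (∑ i, a i * y i ^ 2) :=
  copt_all_ones_optimal_general n a c ha hbig
end

section
/- If Σ_{i∈N} c̃_i²/a_i = 1 and −c̃_i/a_i ≤ 1 for every i ∈ N, then the vector ỹ with ỹ_i = −c̃_i/a_i for all i ∈ N is an optimal solution to (COPT). -/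
/-!
At `ỹ = -c̃ / a` the linear part equals `-∑ c̃ i² / a i = -1` and the quadratic form equals
`∑ c̃ i² / a i = 1`, so the objective is `0`. For any `y`, Cauchy–Schwarz with the weights `a`
gives `(∑ c̃ i y i)² ≤ (∑ c̃ i² / a i) (∑ a i y i²) = ∑ a i y i²`, so the objective is `≥ 0`.
-/

open Finset

theorem Finset.sq_sum_mul_le_sum_sq_div_mul_sum_mul_sq {ι : Type*} (s : Finset ι)
    (a c y : ι → ℝ) (ha : ∀ i ∈ s, 0 < a i) :
    (∑ i ∈ s, c i * y i) ^ 2 ≤ (∑ i ∈ s, c i ^ 2 / a i) * ∑ i ∈ s, a i * y i ^ 2 :=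
  sum_sq_le_sum_mul_sum_of_sq_le_mul s
    (fun i hi => div_nonneg (sq_nonneg _) (ha i hi).le)
    (fun i hi => mul_nonneg (ha i hi).le (sq_nonneg _))
    (fun i hi => le_of_eq (by field_simp [(ha i hi).ne']))

/-- **Closed-form interior optimum for (COPT).** (COPT) is
`min { ∑ c̃ i y i + √(∑ a i y i²) : 0 ≤ y ≤ 1 }` with `a i > 0`, `c̃ i < 0`.
If `∑ i, c̃ i² / a i = 1` and `−c̃ i / a i ≤ 1` for every `i`, then the vector
`ỹ` with `ỹ i = −c̃ i / a i` is feasible and optimal. -/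
theorem copt_interior_optimal
    (n : ℕ) (a c : Fin n → ℝ) (ha : ∀ i, 0 < a i) (hc : ∀ i, c i < 0)
    (hnorm : ∑ i, c i ^ 2 / a i = 1) (hle : ∀ i, -(c i) / a i ≤ 1) :
    (∀ i, 0 ≤ -(c i) / a i ∧ -(c i) / a i ≤ 1) ∧
    ∀ y : Fin n → ℝ, (∀ i, 0 ≤ y i ∧ y i ≤ 1) →
      ∑ i, c i * (-(c i) / a i)
          + Real.sqrt (∑ i, a i * (-(c i) / a i) ^ 2)
        ≤ ∑ i, c i * y i + Real.sqrt (∑ i, a i * y i ^ 2) := by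
  refine ⟨fun i => ⟨div_nonneg (neg_nonneg.2 (hc i).le) (ha i).le, hle i⟩, fun y _ => ?_⟩
  have linear_at_opt : ∑ i, c i * (-(c i) / a i) = -1 := by
    rw [← hnorm, ← sum_neg_distrib]
    exact sum_congr rfl fun i _ => by ring
  have quadratic_at_opt : ∑ i, a i * (-(c i) / a i) ^ 2 = 1 := by
    rw [← hnorm]
    exact sum_congr rfl fun i _ => by field_simp [(ha i).ne']
  have cauchy_schwarz : (∑ i, c i * y i) ^ 2 ≤ ∑ i, a i * y i ^ 2 := by
    simpa [hnorm] using sq_sum_mul_le_sum_sq_div_mul_sum_mul_sq univ a c y fun i _ => ha i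
  have linear_lower_bound := neg_le_of_abs_le (Real.abs_le_sqrt cauchy_schwarz)
  rw [linear_at_opt, quadratic_at_opt, Real.sqrt_one]
  linarith
end
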